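/- With the sets D_n defined by the recursive Mex algorithm, for every n ≥ 0 any two distinct elements of D_n ∩ [Mex(D_n), ∞) differ by at least 2. -/

import Mathlib

/-- Minimum excluded value of a set of natural numbers. -/
noncomputable def mex (S : Set ℕ) : ℕ := sInf {m : ℕ | m ∉ S}

/-- Coordinates of a set of triples. -/
def coords (G : Set (ℕ × ℕ × ℕ)) : Set ℕ :=
  {k | ∃ x ∈ G, k = x.1 ∨ k = x.2.1 ∨ k = x.2.2}

/-- Pairwise coordinate differences of a set of triples. -/
def diffs (G : Set (ℕ × ℕ × ℕ)) : Set ℕ :=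
  {d | ∃ x ∈ G, d = x.2.1 - x.1 ∨ d = x.2.2 - x.2.1 ∨ d = x.2.2 - x.1}

/-- One step of the Mex algorithm: the next P-position. -/
noncomputable def step (G : Set (ℕ × ℕ × ℕ)) : ℕ × ℕ × ℕ :=
  let F := coords G
  let D := diffs G
  let a := mex F
  let b := mex ((fun d => a + d) '' D ∪ Set.Icc 1 a ∪ F)
  let c := mex ((fun d => b + d) '' D ∪ Set.Icc 1 b ∪ F)
  (a, b, c)

/-- The sets `G_n` of P-positions computed by the Mex algorithm. -/
noncomputable def Gset : ℕ → Set (ℕ × ℕ × ℕ)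
  | 0 => {(0, 0, 0)}
  | n + 1 => Gset n ∪ {step (Gset n)}

/-- The `n`-th P-position `(v_1(n), v_2(n), v_3(n))`. -/
noncomputable def v : ℕ → ℕ × ℕ × ℕ
  | 0 => (0, 0, 0)
  | n + 1 => step (Gset n)

noncomputable def v1 (n : ℕ) : ℕ := (v n).1
noncomputable def v2 (n : ℕ) : ℕ := (v n).2.1
noncomputable def v3 (n : ℕ) : ℕ := (v n).2.2

/-- `F_n`: the set of coordinates of elements of `G_n`. -/
noncomputable def Fset (n : ℕ) : Set ℕ := coords (Gset n)

/-- `D_n`: the set of pairwise coordinate differences over `G_n`. -/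
noncomputable def Dset (n : ℕ) : Set ℕ := diffs (Gset n)


/-!
Write `(a_k, b_k, c_k) = v k`, `m_k = mex D_k` and `r_k = c_k - a_k`. Every step of the algorithm
is *regular*: `a_{k+1} + m_k ≤ b_{k+1} < a_{k+1} + m_{k+1}` and `c_{k+1} = b_{k+1} + m_k`. Then
`2 m_k ≤ r_{k+1} ≤ 2 m_{k+1} - 2`, so the `r_k` are pairwise at least `2` apart (and the `c_k` at
least `3` apart, as the `a_k` increase), and every element of `D_n` that is at least `m_n` is some
`r_k`; this is the theorem.

Regularity of step `n + 1` follows from that of the earlier steps. All coordinates so far are below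
`a + 2m`, so `c = b + m`. Every `j` strictly between `m` and `b - a` lies in `D_n`: otherwise
`a + m` and `a + j` are coordinates beyond `a + m`, hence `c_k`'s, hence `3` apart, which leaves
`m + 1` and `m + 2` to be blocked by `D_n`, against the separation of `D_n` above `m`. So all of
`0, …, b - a` lies in `D_{n+1}`, i.e. `b < a + m_{n+1}`.
-/

section Mex

variable {S T : Set ℕ} {k : ℕ}

lemma mex_le_of_notMem (h : k ∉ S) : mex S ≤ k := Nat.sInf_le h

lemma mem_of_lt_mex (h : k < mex S) : k ∈ S := by
  by_contra hk
  exact (mex_le_of_notMem hk).not_gt h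

lemma mex_notMem (hS : S.Finite) : mex S ∉ S :=
  Nat.sInf_mem hS.infinite_compl.nonempty

lemma le_mex (hS : S.Finite) (h : ∀ j < k, j ∈ S) : k ≤ mex S := by
  by_contra hk
  exact mex_notMem hS (h _ (not_le.1 hk))

lemma mex_pos (hS : S.Finite) (h0 : 0 ∈ S) : 0 < mex S :=
  Nat.pos_of_ne_zero fun h => mex_notMem hS (h ▸ h0)

lemma mex_eq (h1 : k ∉ S) (h2 : ∀ j < k, j ∈ S) : mex S = k :=
  (mex_le_of_notMem h1).antisymm <| not_lt.1 fun hlt =>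
    Nat.sInf_mem (⟨k, h1⟩ : {m | m ∉ S}.Nonempty) (h2 _ hlt)

lemma mex_mono (hT : T.Finite) (h : S ⊆ T) : mex S ≤ mex T :=
  mex_le_of_notMem fun hm => mex_notMem hT (h hm)

end Mex

section Forbidden

def forbidden (D F : Set ℕ) (p : ℕ) : Set ℕ := (fun d => p + d) '' D ∪ Set.Icc 1 p ∪ F

variable {D F : Set ℕ} {p x : ℕ}

lemma forbidden_finite (hD : D.Finite) (hF : F.Finite) : (forbidden D F p).Finite :=
  ((hD.image _).union (Set.finite_Icc 1 p)).union hF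

lemma mem_forbidden_iff (hpx : p < x) : x ∈ forbidden D F p ↔ x - p ∈ D ∨ x ∈ F := by
  have hx : ∀ d, p + d = x ↔ d = x - p := fun d => by omega
  simp [forbidden, hx, hpx.not_ge]

lemma mem_forbidden_of_lt_add_mex (h0 : 0 ∈ F) (hx : x < p + mex D) : x ∈ forbidden D F p := by
  rcases Nat.eq_zero_or_pos x with rfl | hx0
  · exact Or.inr h0
  rcases le_or_gt x p with hxp | hpx
  · exact Or.inl (Or.inr ⟨hx0, hxp⟩)
  · exact (mem_forbidden_iff hpx).2 (Or.inl (mem_of_lt_mex (by omega)))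

lemma add_mex_le_mex_forbidden (hD : D.Finite) (hF : F.Finite) (h0 : 0 ∈ F) :
    p + mex D ≤ mex (forbidden D F p) :=
  le_mex (forbidden_finite hD hF) fun _ => mem_forbidden_of_lt_add_mex h0

end Forbidden

lemma coords_union_singleton (G : Set (ℕ × ℕ × ℕ)) (x : ℕ × ℕ × ℕ) :
    coords (G ∪ {x}) = coords G ∪ {x.1, x.2.1, x.2.2} := by
  ext k
  simp [coords, or_and_right, exists_or, or_assoc]

lemma diffs_union_singleton (G : Set (ℕ × ℕ × ℕ)) (x : ℕ × ℕ × ℕ) :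
    diffs (G ∪ {x}) = diffs G ∪ {x.2.1 - x.1, x.2.2 - x.2.1, x.2.2 - x.1} := by
  ext k
  simp [diffs, or_and_right, exists_or, or_assoc]

lemma Fset_zero : Fset 0 = {0} := by
  ext k
  simp [Fset, Gset, coords]

lemma Dset_zero : Dset 0 = {0} := by
  ext k
  simp [Dset, Gset, diffs]

lemma Fset_succ (n : ℕ) : Fset (n + 1) = Fset n ∪ {v1 (n + 1), v2 (n + 1), v3 (n + 1)} :=
  coords_union_singleton _ _

lemma Dset_succ (n : ℕ) : Dset (n + 1) =
    Dset n ∪ {v2 (n + 1) - v1 (n + 1), v3 (n + 1) - v2 (n + 1), v3 (n + 1) - v1 (n + 1)} :=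
  diffs_union_singleton _ _

lemma v1_succ (n : ℕ) : v1 (n + 1) = mex (Fset n) := rfl

lemma v2_succ (n : ℕ) : v2 (n + 1) = mex (forbidden (Dset n) (Fset n) (v1 (n + 1))) := rfl

lemma v3_succ (n : ℕ) : v3 (n + 1) = mex (forbidden (Dset n) (Fset n) (v2 (n + 1))) := rfl

lemma Fset_finite (n : ℕ) : (Fset n).Finite := by
  induction n with
  | zero => simp [Fset_zero]
  | succ n ih => simpa [Fset_succ] using ih

lemma Dset_finite (n : ℕ) : (Dset n).Finite := by
  induction n with
  | zero => simp [Dset_zero]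
  | succ n ih => simpa [Dset_succ] using ih

lemma Fset_mono : Monotone Fset :=
  monotone_nat_of_le_succ fun n => by rw [Fset_succ]; exact Set.subset_union_left

lemma Dset_mono : Monotone Dset :=
  monotone_nat_of_le_succ fun n => by rw [Dset_succ]; exact Set.subset_union_left

lemma zero_mem_Fset (n : ℕ) : 0 ∈ Fset n :=
  Fset_mono n.zero_le (by simp [Fset_zero])

lemma zero_mem_Dset (n : ℕ) : 0 ∈ Dset n :=
  Dset_mono n.zero_le (by simp [Dset_zero])

lemma mex_Dset_mono {k n : ℕ} (h : k ≤ n) : mex (Dset k) ≤ mex (Dset n) :=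
  mex_mono (Dset_finite n) (Dset_mono h)

lemma eq_zero_or_of_mem_Fset {n x : ℕ} (hx : x ∈ Fset n) :
    x = 0 ∨ ∃ k < n, x = v1 (k + 1) ∨ x = v2 (k + 1) ∨ x = v3 (k + 1) := by
  induction n with
  | zero => simpa [Fset_zero] using hx
  | succ n ih =>
    rw [Fset_succ] at hx
    rcases hx with hx | hx
    · obtain h | ⟨k, hk, h⟩ := ih hx
      exacts [Or.inl h, Or.inr ⟨k, by omega, h⟩]
    · exact Or.inr ⟨n, n.lt_succ_self, hx⟩

lemma eq_zero_or_of_mem_Dset {n d : ℕ} (hd : d ∈ Dset n) :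
    d = 0 ∨ ∃ k < n, d = v2 (k + 1) - v1 (k + 1) ∨ d = v3 (k + 1) - v2 (k + 1) ∨
      d = v3 (k + 1) - v1 (k + 1) := by
  induction n with
  | zero => simpa [Dset_zero] using hd
  | succ n ih =>
    rw [Dset_succ] at hd
    rcases hd with hd | hd
    · obtain h | ⟨k, hk, h⟩ := ih hd
      exacts [Or.inl h, Or.inr ⟨k, by omega, h⟩]
    · exact Or.inr ⟨n, n.lt_succ_self, hd⟩

lemma v1_succ_lt_mex_Fset {k n : ℕ} (hk : k < n) : v1 (k + 1) < mex (Fset n) := by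
  have hmem : v1 (k + 1) ∈ Fset n := Fset_mono hk (by simp [Fset_succ])
  have hle : v1 (k + 1) ≤ mex (Fset n) := mex_mono (Fset_finite n) (Fset_mono hk.le)
  exact hle.lt_of_ne fun h => mex_notMem (Fset_finite n) (h ▸ hmem)

lemma v1_add_mex_le_v2_succ (n : ℕ) : v1 (n + 1) + mex (Dset n) ≤ v2 (n + 1) :=
  add_mex_le_mex_forbidden (Dset_finite n) (Fset_finite n) (zero_mem_Fset n)

structure RegularStep (k : ℕ) : Prop where
  v1_add_mex_le : v1 (k + 1) + mex (Dset k) ≤ v2 (k + 1)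
  v2_lt_v1_add_mex : v2 (k + 1) < v1 (k + 1) + mex (Dset (k + 1))
  v3_eq : v3 (k + 1) = v2 (k + 1) + mex (Dset k)

section RegularSteps

variable {n : ℕ}

lemma v3_sub_v1_add_two_le (hreg : ∀ k < n, RegularStep k) {j k : ℕ} (hjk : j < k) (hk : k < n) :
    v3 (j + 1) - v1 (j + 1) + 2 ≤ v3 (k + 1) - v1 (k + 1) := by
  obtain ⟨hj1, hj2, hj3⟩ := hreg j (hjk.trans hk)
  obtain ⟨hk1, -, hk3⟩ := hreg k hk
  have := mex_Dset_mono (show j + 1 ≤ k from hjk)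
  omega

lemma v3_add_three_le (hreg : ∀ k < n, RegularStep k) {j k : ℕ} (hjk : j < k) (hk : k < n) :
    v3 (j + 1) + 3 ≤ v3 (k + 1) := by
  have hr := v3_sub_v1_add_two_le hreg hjk hk
  have ha : v1 (j + 1) < v1 (k + 1) := v1_succ_lt_mex_Fset hjk
  obtain ⟨hj1, -, hj3⟩ := hreg j (hjk.trans hk)
  obtain ⟨hk1, -, hk3⟩ := hreg k hk
  omega

lemma lt_mex_add_two_mul_mex_of_mem_Fset (hreg : ∀ k < n, RegularStep k) {x : ℕ} (hx : x ∈ Fset n) :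
    x < mex (Fset n) + 2 * mex (Dset n) := by
  rcases eq_zero_or_of_mem_Fset hx with rfl | ⟨k, hk, hxk⟩
  · have := mex_pos (Fset_finite n) (zero_mem_Fset n)
    omega
  · obtain ⟨h1, h2, h3⟩ := hreg k hk
    have := v1_succ_lt_mex_Fset hk
    have := mex_Dset_mono (show k + 1 ≤ n from hk)
    omega

lemma exists_eq_v3_of_mem_Fset (hreg : ∀ k < n, RegularStep k) {x : ℕ} (hx : x ∈ Fset n)
    (hmx : mex (Fset n) + mex (Dset n) ≤ x) : ∃ k < n, x = v3 (k + 1) := by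
  rcases eq_zero_or_of_mem_Fset hx with rfl | ⟨k, hk, hxk | hxk | hxk⟩
  · have := mex_pos (Fset_finite n) (zero_mem_Fset n)
    omega
  · have := v1_succ_lt_mex_Fset hk
    omega
  · have := (hreg k hk).v2_lt_v1_add_mex
    have := v1_succ_lt_mex_Fset hk
    have := mex_Dset_mono (show k + 1 ≤ n from hk)
    omega
  · exact ⟨k, hk, hxk⟩

lemma add_three_le_of_mem_Fset (hreg : ∀ k < n, RegularStep k) {x y : ℕ} (hx : x ∈ Fset n)
    (hy : y ∈ Fset n) (hmx : mex (Fset n) + mex (Dset n) ≤ x) (hxy : x < y) : x + 3 ≤ y := by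
  obtain ⟨j, hj, rfl⟩ := exists_eq_v3_of_mem_Fset hreg hx hmx
  obtain ⟨k, hk, rfl⟩ := exists_eq_v3_of_mem_Fset hreg hy (hmx.trans hxy.le)
  rcases lt_trichotomy j k with hjk | rfl | hkj
  · exact v3_add_three_le hreg hjk hk
  · omega
  · have := v3_add_three_le hreg hkj hj
    omega

lemma exists_eq_v3_sub_v1_of_mem_Dset (hreg : ∀ k < n, RegularStep k) {d : ℕ} (hd : d ∈ Dset n)
    (hmd : mex (Dset n) ≤ d) : ∃ k < n, d = v3 (k + 1) - v1 (k + 1) := by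
  rcases eq_zero_or_of_mem_Dset hd with rfl | ⟨k, hk, hdk | hdk | hdk⟩
  · have := mex_pos (Dset_finite n) (zero_mem_Dset n)
    omega
  · obtain ⟨h1, h2, h3⟩ := hreg k hk
    have := mex_Dset_mono (show k + 1 ≤ n from hk)
    omega
  · obtain ⟨h1, h2, h3⟩ := hreg k hk
    have := mex_Dset_mono (show k + 1 ≤ n from hk)
    omega
  · exact ⟨k, hk, hdk⟩

lemma add_two_le_of_mem_Dset (hreg : ∀ k < n, RegularStep k) {d e : ℕ} (hd : d ∈ Dset n)
    (he : e ∈ Dset n) (hmd : mex (Dset n) ≤ d) (hde : d < e) : d + 2 ≤ e := by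
  obtain ⟨j, hj, rfl⟩ := exists_eq_v3_sub_v1_of_mem_Dset hreg hd hmd
  obtain ⟨k, hk, rfl⟩ := exists_eq_v3_sub_v1_of_mem_Dset hreg he (hmd.trans hde.le)
  rcases lt_trichotomy j k with hjk | rfl | hkj
  · exact v3_sub_v1_add_two_le hreg hjk hk
  · omega
  · have := v3_sub_v1_add_two_le hreg hkj hj
    omega

lemma mem_Dset_of_lt_v2_succ (hreg : ∀ k < n, RegularStep k) {j : ℕ} (hmj : mex (Dset n) < j)
    (hj : v1 (n + 1) + j < v2 (n + 1)) : j ∈ Dset n := by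
  have hblocked : ∀ i, mex (Dset n) ≤ i → v1 (n + 1) + i < v2 (n + 1) →
      i ∈ Dset n ∨ v1 (n + 1) + i ∈ Fset n := by
    intro i hi hib
    have hpos := mex_pos (Dset_finite n) (zero_mem_Dset n)
    rw [v2_succ] at hib
    simpa using (mem_forbidden_iff (show v1 (n + 1) < v1 (n + 1) + i by omega)).1
      (mem_of_lt_mex hib)
  have hwindow : ∀ {x y}, v1 (n + 1) + mex (Dset n) ≤ x → x < y → x ∈ Fset n → y ∈ Fset n →
      x + 3 ≤ y :=
    fun hmx hxy hx hy => add_three_le_of_mem_Fset hreg hx hy hmx hxy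
  by_contra hjD
  have hFm : v1 (n + 1) + mex (Dset n) ∈ Fset n :=
    (hblocked _ le_rfl (by omega)).resolve_left (mex_notMem (Dset_finite n))
  have hFj : v1 (n + 1) + j ∈ Fset n := (hblocked j hmj.le hj).resolve_left hjD
  have hmj3 := hwindow le_rfl (by omega) hFm hFj
  -- the two points after `a + m` are blocked, but too close to `a + m` to be coordinates
  have hD : ∀ i, 0 < i → i < 3 → mex (Dset n) + i ∈ Dset n := fun i hi0 hi3 =>
    (hblocked _ (by omega) (by omega)).resolve_right fun hF => by
      have := hwindow (y := v1 (n + 1) + (mex (Dset n) + i)) le_rfl (by omega) hFm hF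
      omega
  have := add_two_le_of_mem_Dset hreg (hD 1 (by omega) (by omega)) (hD 2 (by omega) (by omega))
    (by omega) (by omega)
  omega

lemma v3_succ_eq (hreg : ∀ k < n, RegularStep k) : v3 (n + 1) = v2 (n + 1) + mex (Dset n) := by
  have hb := v1_add_mex_le_v2_succ n
  have hpos := mex_pos (Dset_finite n) (zero_mem_Dset n)
  rw [v3_succ]
  refine mex_eq (fun hmem => ?_) fun _ => mem_forbidden_of_lt_add_mex (zero_mem_Fset n)
  rcases (mem_forbidden_iff (by omega)).1 hmem with hD | hF
  · exact mex_notMem (Dset_finite n) (by simpa using hD)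
  · have := lt_mex_add_two_mul_mex_of_mem_Fset hreg hF
    rw [← v1_succ] at this
    omega

lemma v2_succ_lt (hreg : ∀ k < n, RegularStep k) :
    v2 (n + 1) < v1 (n + 1) + mex (Dset (n + 1)) := by
  have hb := v1_add_mex_le_v2_succ n
  suffices h : ∀ j < v2 (n + 1) - v1 (n + 1) + 1, j ∈ Dset (n + 1) by
    have := le_mex (Dset_finite (n + 1)) h
    omega
  intro j hj
  rw [Dset_succ]
  rcases lt_trichotomy j (mex (Dset n)) with hjm | rfl | hjm
  · exact Or.inl (mem_of_lt_mex hjm)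
  · simp [v3_succ_eq hreg]
  rcases (Nat.lt_succ_iff.1 hj).lt_or_eq with hjb | rfl
  · exact Or.inl (mem_Dset_of_lt_v2_succ hreg hjm (by omega))
  · simp

lemma regularStep (n : ℕ) : RegularStep n := by
  induction n using Nat.strong_induction_on with
  | _ n ih =>
    exact ⟨v1_add_mex_le_v2_succ n, v2_succ_lt ih, v3_succ_eq ih⟩

end RegularSteps

theorem stmt15 : ∀ n : ℕ, ∀ a ∈ Dset n, ∀ b ∈ Dset n,
    mex (Dset n) ≤ a → mex (Dset n) ≤ b → a ≠ b → 2 ≤ |(a : ℤ) - b| := by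
  intro n a ha b hb hma hmb hab
  have hreg : ∀ k < n, RegularStep k := fun k _ => regularStep k
  rcases hab.lt_or_gt with h | h
  · have := add_two_le_of_mem_Dset hreg ha hb hma h
    exact le_abs.2 (Or.inr (by omega))
  · have := add_two_le_of_mem_Dset hreg hb ha hmb h
    exact le_abs.2 (Or.inl (by omega))
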